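/- Let N ≥ 2 be an integer and γ > 0, ρ > 0, β > 0 reals. For λ > 0 define M_rate(λ) = √(γ/((N+1)λ) + ρ²/4) − ρ/2 and M_aim(λ) = (√(γ/((N+1)λ) + ρ²/4) + ρ/2)/(√(γ/((N+1)λ) + ρ²/4) + ρ/2 + β). Then M_rate(λ) > 0 and 0 < M_aim(λ) < 1 for every λ > 0, lim_{λ→0⁺} (M_rate(λ) − √(γ/((N+1)λ))) = −ρ/2, and lim_{λ→0⁺} (1 − M_aim(λ))/√λ = β·√((N+1)/γ). -/

import Mathlib

open Filter

/-- Open-loop relative trading speed. -/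
noncomputable def MrateOL (N : ℕ) (γ ρ lam : ℝ) : ℝ :=
  Real.sqrt (γ / (((N : ℝ) + 1) * lam) + ρ ^ 2 / 4) - ρ / 2

/-- Open-loop aim-portfolio multiplier. -/
noncomputable def MaimOL (N : ℕ) (γ ρ β lam : ℝ) : ℝ :=
  (Real.sqrt (γ / (((N : ℝ) + 1) * lam) + ρ ^ 2 / 4) + ρ / 2)
    / (Real.sqrt (γ / (((N : ℝ) + 1) * lam) + ρ ^ 2 / 4) + ρ / 2 + β)

/-- Signs and small-`λ` asymptotics of the open-loop equilibrium coefficients: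
`M_rate(λ) > 0`, `0 < M_aim(λ) < 1`, `M_rate(λ) − √(γ/((N+1)λ)) → −ρ/2`, and
`(1 − M_aim(λ))/√λ → β√((N+1)/γ)` as `λ → 0⁺`. -/
theorem open_loop_coefficients_asymptotics
    (N : ℕ) (hN : 2 ≤ N) (γ ρ β : ℝ) (hγ : 0 < γ) (hρ : 0 < ρ) (hβ : 0 < β) :
    (∀ lam : ℝ, 0 < lam → 0 < MrateOL N γ ρ lam) ∧
    (∀ lam : ℝ, 0 < lam → 0 < MaimOL N γ ρ β lam ∧ MaimOL N γ ρ β lam < 1) ∧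
    Tendsto (fun lam : ℝ => MrateOL N γ ρ lam - Real.sqrt (γ / (((N : ℝ) + 1) * lam)))
      (nhdsWithin (0 : ℝ) (Set.Ioi 0)) (nhds (-ρ / 2)) ∧
    Tendsto (fun lam : ℝ => (1 - MaimOL N γ ρ β lam) / Real.sqrt lam)
      (nhdsWithin (0 : ℝ) (Set.Ioi 0)) (nhds (β * Real.sqrt (((N : ℝ) + 1) / γ))) := by
  set K : ℝ := (N : ℝ) + 1 with hKdef
  have hK : (0 : ℝ) < K := by positivity
  -- s(λ) > ρ/2 for λ > 0
  have hsgt : ∀ lam : ℝ, 0 < lam →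
      ρ / 2 < Real.sqrt (γ / (K * lam) + ρ ^ 2 / 4) := by
    intro lam hlam
    have hA : 0 < γ / (K * lam) := by positivity
    have h1 : Real.sqrt (ρ ^ 2 / 4) = ρ / 2 := by
      rw [show ρ ^ 2 / 4 = (ρ / 2) ^ 2 by ring, Real.sqrt_sq (by linarith)]
    calc ρ / 2 = Real.sqrt (ρ ^ 2 / 4) := h1.symm
      _ < Real.sqrt (γ / (K * lam) + ρ ^ 2 / 4) :=
          Real.sqrt_lt_sqrt (by positivity) (by linarith)
  refine ⟨?_, ?_, ?_, ?_⟩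
  · intro lam hlam
    have := hsgt lam hlam
    unfold MrateOL
    linarith
  · intro lam hlam
    have hs := hsgt lam hlam
    unfold MaimOL
    constructor
    · apply div_pos <;> linarith
    · rw [div_lt_one (by linarith)]
      linarith
  · -- limit of M_rate - √A
    have hA : Tendsto (fun lam : ℝ => γ / (K * lam)) (nhdsWithin 0 (Set.Ioi 0)) atTop := by
      have h1 : Tendsto (fun lam : ℝ => lam⁻¹) (nhdsWithin 0 (Set.Ioi 0)) atTop :=
        tendsto_inv_nhdsGT_zero
      have h2 := h1.const_mul_atTop (show (0:ℝ) < γ / K by positivity)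
      convert h2 using 2 with lam
      rw [div_eq_mul_inv, mul_inv, div_eq_mul_inv]
      ring
    have hD : Tendsto (fun lam : ℝ =>
        Real.sqrt (γ / (K * lam) + ρ ^ 2 / 4) + Real.sqrt (γ / (K * lam)))
        (nhdsWithin 0 (Set.Ioi 0)) atTop := by
      apply tendsto_atTop_mono (f := fun lam : ℝ => Real.sqrt (γ / (K * lam)))
      · intro lam
        have := Real.sqrt_nonneg (γ / (K * lam) + ρ ^ 2 / 4)
        linarith
      · have hsqrtTop : Tendsto Real.sqrt atTop atTop := by
          apply tendsto_atTop_atTop.mpr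
          intro b
          refine ⟨max 0 (b ^ 2), fun a ha => ?_⟩
          have h2 := Real.sqrt_le_sqrt (le_trans (le_max_right 0 (b ^ 2)) ha)
          rw [Real.sqrt_sq_eq_abs] at h2
          have := le_abs_self b
          linarith
        exact hsqrtTop.comp hA
    have hzero : Tendsto (fun lam : ℝ => (ρ ^ 2 / 4) /
        (Real.sqrt (γ / (K * lam) + ρ ^ 2 / 4) + Real.sqrt (γ / (K * lam))))
        (nhdsWithin 0 (Set.Ioi 0)) (nhds 0) :=
      Tendsto.div_atTop tendsto_const_nhds hD
    have hfinal := hzero.sub_const (ρ / 2)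
    rw [zero_sub] at hfinal
    have heq : ∀ lam ∈ Set.Ioi (0:ℝ),
        (ρ ^ 2 / 4) / (Real.sqrt (γ / (K * lam) + ρ ^ 2 / 4) + Real.sqrt (γ / (K * lam)))
          - ρ / 2
        = MrateOL N γ ρ lam - Real.sqrt (γ / (K * lam)) := by
      intro lam hlam
      have hlam' : (0:ℝ) < lam := hlam
      have hApos : 0 < γ / (K * lam) := by positivity
      set x := Real.sqrt (γ / (K * lam) + ρ ^ 2 / 4) with hxdef
      set y := Real.sqrt (γ / (K * lam)) with hydef
      have hx2 : x ^ 2 = γ / (K * lam) + ρ ^ 2 / 4 := Real.sq_sqrt (by positivity)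
      have hy2 : y ^ 2 = γ / (K * lam) := Real.sq_sqrt (by positivity)
      have hxpos : 0 < x := Real.sqrt_pos.mpr (by positivity)
      have hynn : 0 ≤ y := Real.sqrt_nonneg _
      unfold MrateOL
      rw [← hxdef]
      have hxy : 0 < x + y := by linarith
      have hkey : ρ ^ 2 / 4 / (x + y) = x - y := by
        rw [div_eq_iff (ne_of_gt hxy)]
        nlinarith [hx2, hy2]
      rw [hkey]
      ring
    rw [show -ρ / 2 = -(ρ / 2) by ring]
    refine hfinal.congr' ?_
    filter_upwards [self_mem_nhdsWithin] with lam hlam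
    exact heq lam hlam
  · -- limit of (1 - M_aim)/√λ
    have hden : Tendsto (fun lam : ℝ =>
        Real.sqrt (γ / K + lam * (ρ ^ 2 / 4)) + Real.sqrt lam * (ρ / 2 + β))
        (nhdsWithin 0 (Set.Ioi 0)) (nhds (Real.sqrt (γ / K))) := by
      have h1 : Tendsto (fun lam : ℝ => Real.sqrt (γ / K + lam * (ρ ^ 2 / 4)))
          (nhds 0) (nhds (Real.sqrt (γ / K))) := by
        have hc : Continuous (fun lam : ℝ => Real.sqrt (γ / K + lam * (ρ ^ 2 / 4))) := by
          continuity
        have := hc.tendsto 0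
        simpa using this
      have h2 : Tendsto (fun lam : ℝ => Real.sqrt lam * (ρ / 2 + β))
          (nhds 0) (nhds 0) := by
        have hc : Continuous (fun lam : ℝ => Real.sqrt lam * (ρ / 2 + β)) := by
          continuity
        have := hc.tendsto 0
        simpa using this
      have := (h1.add h2).mono_left (nhdsWithin_le_nhds (s := Set.Ioi (0:ℝ)))
      simpa using this
    have hsq : (0:ℝ) < Real.sqrt (γ / K) := Real.sqrt_pos.mpr (by positivity)
    have hlim : Tendsto (fun lam : ℝ => β /
        (Real.sqrt (γ / K + lam * (ρ ^ 2 / 4)) + Real.sqrt lam * (ρ / 2 + β)))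
        (nhdsWithin 0 (Set.Ioi 0)) (nhds (β / Real.sqrt (γ / K))) :=
      Tendsto.div tendsto_const_nhds hden (ne_of_gt hsq)
    have hval : β / Real.sqrt (γ / K) = β * Real.sqrt (K / γ) := by
      have : Real.sqrt (K / γ) = (Real.sqrt (γ / K))⁻¹ := by
        rw [show K / γ = (γ / K)⁻¹ by rw [inv_div], Real.sqrt_inv]
      rw [this, div_eq_mul_inv]
    rw [hval] at hlim
    refine hlim.congr' ?_
    filter_upwards [self_mem_nhdsWithin] with lam hlam
    have hlam' : (0:ℝ) < lam := hlam
    have hs := hsgt lam hlam'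
    have hsl : (0:ℝ) < Real.sqrt lam := Real.sqrt_pos.mpr hlam'
    set s := Real.sqrt (γ / (K * lam) + ρ ^ 2 / 4) with hsdef
    have hsplit : Real.sqrt (γ / K + lam * (ρ ^ 2 / 4)) = Real.sqrt lam * s := by
      rw [hsdef, ← Real.sqrt_mul hlam'.le]
      congr 1
      field_simp
    have hDpos : 0 < s + ρ / 2 + β := by linarith
    have hMaim : 1 - MaimOL N γ ρ β lam = β / (s + ρ / 2 + β) := by
      unfold MaimOL
      rw [← hsdef]
      field_simp
      rw [eq_div_iff (by linarith), sub_mul, div_mul_cancel₀ _ (by linarith)]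
      ring
    rw [hsplit, hMaim]
    rw [div_div]
    congr 1
    ring
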